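/- arXiv:2106.03028 — 6 statements merged into one kernel-verified Lean document; each statement's English description precedes it below -/
import Mathlib

section
/- Let V be a finite set with |V| = n ≥ 1, let N_1, …, N_M : V → A be labelings, and suppose there is a partition of {1,…,M} into clusters such that N_i = N_j whenever i and j lie in the same cluster, and |diff(N_i, N_j)| ≥ α·n whenever i and j lie in different clusters, where 0 < α ≤ 1. Let 0 < δ ≤ 1 and let u_1, …, u_s be sampled i.i.d. uniformly from V with s ≥ (2/α)·ln(M/δ). Then with probability at least 1 − δ the following holds simultaneously for all pairs i, j ∈ {1,…,M}: N_i(u_t) = N_j(u_t) for every t ∈ {1,…,s} if and only if i and j lie in the same cluster. -/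
/-!
Two labelings in different clusters agree on at most a `1 - α ≤ exp (-α)` fraction of `V`, so
they agree on all `s` independent samples with probability at most `exp (-α s)`. A union bound
over the `M²` ordered pairs bounds the failure probability by `M² exp (-α s) ≤ δ² ≤ δ`; pairs in
the same cluster never fail, since their labelings coincide.
-/

open Finset Real

section Sampling

variable {V A : Type*} [Fintype V] [DecidableEq A]

lemma card_filter_eq_le_exp_neg_mul_card (f g : V → A) {α : ℝ}
    (hdiff : α * Fintype.card V ≤ (#{u | f u ≠ g u} : ℝ)) :
    (#{u | f u = g u} : ℝ) ≤ exp (-α) * Fintype.card V := by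
  have hsplit : (#{u | f u = g u} : ℝ) + #{u | ¬ f u = g u} = Fintype.card V := by
    exact_mod_cast card_filter_add_card_filter_not (s := univ) _
  have hexp : 1 - α ≤ exp (-α) := by linarith [add_one_le_exp (-α)]
  nlinarith [(Fintype.card V).cast_nonneg (α := ℝ)]

lemma card_filter_forall_eq_le (f g : V → A) {α : ℝ}
    (hdiff : α * Fintype.card V ≤ (#{u | f u ≠ g u} : ℝ)) (s : ℕ) :
    (#{u : Fin s → V | ∀ t, f (u t) = g (u t)} : ℝ) ≤ exp (-(α * s)) * Fintype.card V ^ s := by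
  have hpi : ({u : Fin s → V | ∀ t, f (u t) = g (u t)} : Finset _) =
      Fintype.piFinset fun _ => ({v | f v = g v} : Finset V) := by
    ext u
    simp
  calc (#{u : Fin s → V | ∀ t, f (u t) = g (u t)} : ℝ) = (#{v | f v = g v} : ℝ) ^ s := by
        simp [hpi, Fintype.card_piFinset]
    _ ≤ (exp (-α) * Fintype.card V) ^ s :=
        pow_le_pow_left₀ (by positivity) (card_filter_eq_le_exp_neg_mul_card f g hdiff) s
    _ = exp (-(α * s)) * Fintype.card V ^ s := by
        rw [mul_pow, ← exp_nat_mul]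
        ring_nf

lemma card_filter_not_forall_eq_iff_le {M : ℕ} {κ : Type*} [DecidableEq κ]
    (N : Fin M → V → A) (cl : Fin M → κ) {α : ℝ}
    (hsame : ∀ i j, cl i = cl j → N i = N j)
    (hdiff : ∀ i j, cl i ≠ cl j → α * Fintype.card V ≤ (#{u | N i u ≠ N j u} : ℝ)) (s : ℕ) :
    (#{u : Fin s → V | ¬ ∀ i j, ((∀ t, N i (u t) = N j (u t)) ↔ cl i = cl j)} : ℝ) ≤
      (M : ℝ) ^ 2 * (exp (-(α * s)) * Fintype.card V ^ s) := by
  classical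
  set agree : Fin M × Fin M → Finset (Fin s → V) := fun p =>
    if cl p.1 = cl p.2 then ∅ else ({u | ∀ t, N p.1 (u t) = N p.2 (u t)} : Finset _)
  have hsub : ({u : Fin s → V | ¬ ∀ i j, ((∀ t, N i (u t) = N j (u t)) ↔ cl i = cl j)} :
      Finset _) ⊆ univ.biUnion agree := by
    intro u hu
    simp only [mem_filter, mem_univ, true_and, not_forall] at hu
    obtain ⟨i, j, hfail⟩ := hu
    by_cases hcl : cl i = cl j
    · exact absurd (iff_of_true (fun t => congrFun (hsame i j hcl) (u t)) hcl) hfail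
    · refine mem_biUnion.2 ⟨(i, j), mem_univ _, ?_⟩
      simpa [agree, hcl] using hfail
  have hagree : ∀ p, (#(agree p) : ℝ) ≤ exp (-(α * s)) * Fintype.card V ^ s := by
    intro p
    by_cases hcl : cl p.1 = cl p.2
    · simp only [agree, if_pos hcl, card_empty, Nat.cast_zero]
      positivity
    · simp only [agree, if_neg hcl]
      exact card_filter_forall_eq_le _ _ (hdiff _ _ hcl) s
  calc _ ≤ (#(univ.biUnion agree) : ℝ) := by exact_mod_cast card_le_card hsub
    _ ≤ ∑ p, (#(agree p) : ℝ) := by exact_mod_cast card_biUnion_le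
    _ ≤ ∑ _p : Fin M × Fin M, exp (-(α * s)) * Fintype.card V ^ s := sum_le_sum fun p _ => hagree p
    _ = _ := by simp [Fintype.card_prod, sq]

end Sampling

lemma sq_mul_exp_neg_le {M : ℕ} {α δ s : ℝ} (hα : 0 < α) (hδ0 : 0 < δ) (hδ1 : δ ≤ 1)
    (hs : (2 / α) * log (M / δ) ≤ s) :
    (M : ℝ) ^ 2 * exp (-(α * s)) ≤ δ := by
  rcases M.eq_zero_or_pos with rfl | hM
  · simpa using hδ0.le
  have hMδ : 0 < (M : ℝ) / δ := by positivity
  have hlog : 2 * log (M / δ) ≤ α * s := by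
    rw [div_mul_eq_mul_div, div_le_iff₀ hα] at hs
    linarith
  have hexp : ((M : ℝ) / δ) ^ 2 ≤ exp (α * s) := by
    calc ((M : ℝ) / δ) ^ 2 = exp (2 * log (M / δ)) := by
          rw [← Nat.cast_two (R := ℝ), ← log_pow, exp_log (by positivity)]
      _ ≤ exp (α * s) := exp_le_exp.2 hlog
  calc (M : ℝ) ^ 2 * exp (-(α * s)) = δ ^ 2 * (((M : ℝ) / δ) ^ 2 * exp (-(α * s))) := by
        field_simp
    _ ≤ δ ^ 2 * 1 := by
        gcongr
        rw [exp_neg, ← div_eq_mul_inv, div_le_one (exp_pos _)]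
        exact hexp
    _ ≤ δ := by nlinarith

theorem stmt_3_general {V A κ : Type*} [Fintype V] [DecidableEq A] [DecidableEq κ]
    (n : ℕ) (hn : 1 ≤ n) (hV : Fintype.card V = n)
    (M : ℕ) (N : Fin M → V → A) (cl : Fin M → κ)
    (α δ : ℝ) (hα0 : 0 < α) (hδ0 : 0 < δ) (hδ1 : δ ≤ 1)
    (hsame : ∀ i j : Fin M, cl i = cl j → N i = N j)
    (hdiff : ∀ i j : Fin M, cl i ≠ cl j →
      α * n ≤ ((Finset.univ.filter (fun u : V => N i u ≠ N j u)).card : ℝ))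
    (s : ℕ) (hs : (2 / α) * Real.log ((M : ℝ) / δ) ≤ (s : ℝ)) :
    1 - δ ≤ ((Finset.univ.filter
        (fun u : Fin s → V => ∀ i j : Fin M,
          ((∀ t : Fin s, N i (u t) = N j (u t)) ↔ cl i = cl j))).card : ℝ) /
      (n : ℝ) ^ s := by
  subst hV
  have hbad := card_filter_not_forall_eq_iff_le N cl hsame hdiff s
  have hsplit := card_filter_add_card_filter_not (s := (univ : Finset (Fin s → V)))
    fun u => ∀ i j : Fin M, ((∀ t : Fin s, N i (u t) = N j (u t)) ↔ cl i = cl j)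
  rw [card_univ, Fintype.card_fun, Fintype.card_fin] at hsplit
  have hsplitR := congrArg (Nat.cast (R := ℝ)) hsplit
  push_cast at hsplitR
  have hpos : (0 : ℝ) < (Fintype.card V : ℝ) ^ s := pow_pos (by exact_mod_cast hn) s
  have hfail := mul_le_mul_of_nonneg_right (sq_mul_exp_neg_le hα0 hδ0 hδ1 hs) hpos.le
  rw [le_div_iff₀ hpos]
  linarith

/-- Under `α`-clustering (same cluster ⇒ identical labelings; different clusters ⇒
`|diff| ≥ α n`), with probability `≥ 1-δ` over `s ≥ (2/α)ln(M/δ)` uniform samples,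
agreement on all samples holds iff the entities lie in the same cluster. -/
theorem stmt_3 {V A κ : Type*} [Fintype V] [DecidableEq A] [DecidableEq κ]
    (n : ℕ) (hn : 1 ≤ n) (hV : Fintype.card V = n)
    (M : ℕ) (N : Fin M → V → A) (cl : Fin M → κ)
    (α δ : ℝ) (hα0 : 0 < α) (hα1 : α ≤ 1) (hδ0 : 0 < δ) (hδ1 : δ ≤ 1)
    (hsame : ∀ i j : Fin M, cl i = cl j → N i = N j)
    (hdiff : ∀ i j : Fin M, cl i ≠ cl j →
      α * n ≤ ((Finset.univ.filter (fun u : V => N i u ≠ N j u)).card : ℝ))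
    (s : ℕ) (hs : (2 / α) * Real.log ((M : ℝ) / δ) ≤ (s : ℝ)) :
    1 - δ ≤ ((Finset.univ.filter
        (fun u : Fin s → V => ∀ i j : Fin M,
          ((∀ t : Fin s, N i (u t) = N j (u t)) ↔ cl i = cl j))).card : ℝ) /
      (n : ℝ) ^ s :=
  stmt_3_general n hn hV M N cl α δ hα0 hδ0 hδ1 hsame hdiff s hs
end

section
/- Let n ≥ 1 bins be given, let 0 < δ ≤ 1 be real, and let m balls be placed independently, each into a bin chosen uniformly at random among the n bins. If m ≥ 8·n·ln(n/δ) and n ≥ δ, then with probability at least 1 − δ every one of the n bins receives at least m/(2n) balls. -/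
/-!
Fix a bin `u` and write `X` for its load. For `c = e^{-1/2}` the moment `∑_π c^{X(π)}` factorises
over the balls as `(n - 1 + c)^m ≤ n^m e^{-(1-c)m/n}`, so the exponential Markov inequality bounds
the number of assignments with `X < m/(2n)` by `n^m e^{-m/(8n)}`, using `c ≤ 5/8`. A union bound
over the `n` bins leaves a failure probability of at most `n e^{-m/(8n)}`, which is `≤ δ` as soon as
`m ≥ 8n ln(n/δ)`.
-/

open Finset

lemma card_filter_lt_le_exp_mul_sum {ι : Type*} (s : Finset ι) (X : ι → ℝ) (a : ℝ) {t : ℝ}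
    (ht : 0 ≤ t) :
    (#{x ∈ s | X x < a} : ℝ) ≤ Real.exp (t * a) * ∑ x ∈ s, Real.exp (-(t * X x)) := by
  rw [mul_sum, ← sum_filter_add_sum_filter_not s (fun x => X x < a)]
  refine le_add_of_le_of_nonneg ?_ (sum_nonneg fun _ _ => by positivity)
  calc (#{x ∈ s | X x < a} : ℝ) = ∑ x ∈ s with X x < a, 1 := by simp
    _ ≤ _ := sum_le_sum fun x hx => by
      rw [← Real.exp_add]
      exact Real.one_le_exp (by nlinarith [(mem_filter.mp hx).2])

lemma exp_neg_half_le : Real.exp (-(1 / 2)) ≤ 5 / 8 := by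
  rw [Real.exp_neg, inv_le_comm₀ (Real.exp_pos _) (by norm_num)]
  linarith [Real.quadratic_le_exp_of_nonneg (x := 1 / 2) (by norm_num)]

section BallsInBins

variable {α β : Type*} [Fintype α] [DecidableEq β]

def load (f : α → β) (u : β) : ℕ := #{i | f i = u}

lemma prod_ite_eq_pow_load {M : Type*} [CommMonoid M] (f : α → β) (u : β) (c : M) :
    ∏ i, (if f i = u then c else 1) = c ^ load f u := by
  rw [prod_ite, prod_const, prod_const, one_pow, mul_one, load]

variable [DecidableEq α] [Fintype β]

lemma sum_pow_load {R : Type*} [CommRing R] (u : β) (c : R) :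
    ∑ f : α → β, c ^ load f u = ((Fintype.card β : R) - 1 + c) ^ Fintype.card α := by
  have hweights : ∑ v : β, (if v = u then c else 1) = (Fintype.card β : R) - 1 + c := by
    rw [Fintype.sum_eq_add_sum_compl u, if_pos rfl,
      sum_congr rfl fun v hv => if_neg (mem_compl.mp hv ∘ mem_singleton.mpr)]
    simp only [sum_const, card_compl, card_singleton, nsmul_one,
      Nat.cast_sub (Fintype.card_pos_iff.mpr ⟨u⟩), Nat.cast_one]
    ring
  simp_rw [← prod_ite_eq_pow_load, ← Fintype.prod_sum (fun _ v => if v = u then c else 1),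
    hweights, prod_const, card_univ]

lemma sum_pow_load_le_exp (u : β) {c : ℝ} (hc : 0 ≤ c) :
    ∑ f : α → β, c ^ load f u ≤
      (Fintype.card β : ℝ) ^ Fintype.card α *
        Real.exp (-(1 - c) * Fintype.card α / Fintype.card β) := by
  have hβ : (1 : ℝ) ≤ Fintype.card β := by exact_mod_cast Fintype.card_pos_iff.mpr ⟨u⟩
  have hbase : (Fintype.card β : ℝ) - 1 + c ≤
      Fintype.card β * Real.exp (-(1 - c) / Fintype.card β) := by
    calc (Fintype.card β : ℝ) - 1 + c
        = Fintype.card β * (-(1 - c) / Fintype.card β + 1) := by field_simp; ring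
      _ ≤ Fintype.card β * Real.exp (-(1 - c) / Fintype.card β) := by
        gcongr; exact Real.add_one_le_exp _
  calc ∑ f : α → β, c ^ load f u
      = ((Fintype.card β : ℝ) - 1 + c) ^ Fintype.card α := sum_pow_load u c
    _ ≤ (Fintype.card β * Real.exp (-(1 - c) / Fintype.card β)) ^ Fintype.card α :=
      pow_le_pow_left₀ (by linarith) hbase _
    _ = _ := by rw [mul_pow, ← Real.exp_nat_mul]; ring_nf

lemma card_filter_load_lt_le (u : β) :
    (#{f : α → β | (load f u : ℝ) < Fintype.card α / (2 * Fintype.card β)} : ℝ) ≤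
      (Fintype.card β : ℝ) ^ Fintype.card α *
        Real.exp (-(Fintype.card α / (8 * Fintype.card β))) := by
  have hn : (0 : ℝ) < Fintype.card β := by exact_mod_cast Fintype.card_pos_iff.mpr ⟨u⟩
  set m : ℝ := (Fintype.card α : ℝ)
  set n : ℝ := (Fintype.card β : ℝ)
  set c := Real.exp (-(1 / 2))
  have hmoment : ∑ f : α → β, Real.exp (-(1 / 2 * load f u)) = ∑ f : α → β, c ^ load f u := by
    simp_rw [c, ← Real.exp_nat_mul]; ring_nf
  -- With `c ≤ 5/8` the exponent `m/(4n) - (1-c) m/n` is at most `-m/(8n)`.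
  have hexponent : 1 / 2 * (m / (2 * n)) + -(1 - c) * m / n ≤ -(m / (8 * n)) := by
    rw [show 1 / 2 * (m / (2 * n)) + -(1 - c) * m / n = m / n * (c - 3 / 4) by ring,
      show -(m / (8 * n)) = m / n * (-1 / 8) by ring]
    exact mul_le_mul_of_nonneg_left (by linarith [exp_neg_half_le]) (by positivity)
  calc (#{f : α → β | (load f u : ℝ) < m / (2 * n)} : ℝ)
      ≤ Real.exp (1 / 2 * (m / (2 * n))) * ∑ f : α → β, c ^ load f u := by
        rw [← hmoment]; exact card_filter_lt_le_exp_mul_sum _ _ _ (by norm_num)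
    _ ≤ Real.exp (1 / 2 * (m / (2 * n))) * (n ^ Fintype.card α * Real.exp (-(1 - c) * m / n)) := by
        gcongr; exact sum_pow_load_le_exp u (Real.exp_pos _).le
    _ ≤ n ^ Fintype.card α * Real.exp (-(m / (8 * n))) := by
        rw [mul_left_comm, ← Real.exp_add]; gcongr

lemma card_filter_exists_load_lt_le :
    (#{f : α → β | ∃ u, (load f u : ℝ) < Fintype.card α / (2 * Fintype.card β)} : ℝ) ≤
      Fintype.card β * ((Fintype.card β : ℝ) ^ Fintype.card α *
        Real.exp (-(Fintype.card α / (8 * Fintype.card β)))) := by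
  calc (#{f : α → β | ∃ u, (load f u : ℝ) < Fintype.card α / (2 * Fintype.card β)} : ℝ)
      ≤ ∑ u : β, (#{f : α → β | (load f u : ℝ) < Fintype.card α / (2 * Fintype.card β)} : ℝ) := by
        norm_cast
        refine (card_le_card fun f hf => ?_).trans card_biUnion_le
        simpa using hf
    _ ≤ ∑ _u : β, (Fintype.card β : ℝ) ^ Fintype.card α *
          Real.exp (-(Fintype.card α / (8 * Fintype.card β))) :=
        sum_le_sum fun u _ => card_filter_load_lt_le u
    _ = _ := by rw [sum_const, card_univ, nsmul_eq_mul]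

lemma one_sub_le_card_filter_forall_le_load_div [Nonempty β] :
    1 - Fintype.card β * Real.exp (-(Fintype.card α / (8 * Fintype.card β))) ≤
      (#{f : α → β | ∀ u, (Fintype.card α : ℝ) / (2 * Fintype.card β) ≤ load f u} : ℝ) /
        (Fintype.card β : ℝ) ^ Fintype.card α := by
  have hsplit := card_filter_add_card_filter_not (s := univ)
    fun f : α → β => ∀ u, (Fintype.card α : ℝ) / (2 * Fintype.card β) ≤ load f u
  simp only [not_forall, not_le, card_univ, Fintype.card_fun] at hsplit
  have hsplit' := congrArg (Nat.cast (R := ℝ)) hsplit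
  push_cast at hsplit'
  rw [le_div_iff₀ (by positivity)]
  linarith [card_filter_exists_load_lt_le (α := α) (β := β)]

end BallsInBins

theorem stmt_7_general (n : ℕ) (hn : 1 ≤ n) (δ : ℝ) (hδ0 : 0 < δ)
    (m : ℕ) (hm : 8 * (n : ℝ) * Real.log ((n : ℝ) / δ) ≤ (m : ℝ)) :
    1 - δ ≤ ((Finset.univ.filter
        (fun π : Fin m → Fin n => ∀ u : Fin n,
          (m : ℝ) / (2 * n) ≤ ((Finset.univ.filter (fun i : Fin m => π i = u)).card : ℝ))).card : ℝ) /
      (n : ℝ) ^ m := by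
  have : Nonempty (Fin n) := Fin.pos_iff_nonempty.mp hn
  have hn0 : (0 : ℝ) < n := by exact_mod_cast hn
  have hfailure : (n : ℝ) * Real.exp (-(m / (8 * n))) ≤ δ := by
    have hlog : Real.log (n / δ) ≤ m / (8 * n) := by
      rw [le_div_iff₀ (by positivity)]; linarith
    calc (n : ℝ) * Real.exp (-(m / (8 * n))) ≤ n * Real.exp (-Real.log (n / δ)) := by gcongr
      _ = δ := by
        rw [Real.exp_neg, Real.exp_log (by positivity), inv_div, mul_div_cancel₀ _ hn0.ne']
  have hall := one_sub_le_card_filter_forall_le_load_div (α := Fin m) (β := Fin n)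
  simp only [Fintype.card_fin] at hall
  exact (sub_le_sub_left hfailure 1).trans hall

/-- Balls in bins: if `m ≥ 8 n ln(n/δ)` balls are thrown uniformly and independently
into `n` bins, then with probability `≥ 1-δ` every bin receives `≥ m/(2n)` balls. -/
theorem stmt_7 (n : ℕ) (hn : 1 ≤ n) (δ : ℝ) (hδ0 : 0 < δ) (hδ1 : δ ≤ 1)
    (m : ℕ) (hm : 8 * (n : ℝ) * Real.log ((n : ℝ) / δ) ≤ (m : ℝ)) (hnδ : δ ≤ (n : ℝ)) :
    1 - δ ≤ ((Finset.univ.filter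
        (fun π : Fin m → Fin n => ∀ u : Fin n,
          (m : ℝ) / (2 * n) ≤ ((Finset.univ.filter (fun i : Fin m => π i = u)).card : ℝ))).card : ℝ) /
      (n : ℝ) ^ m :=
  stmt_7_general n hn δ hδ0 m hm
end

section
/- Let V be a finite set with |V| = n ≥ 1, let N_1, …, N_m : V → A be labelings, let 1/2 < γ ≤ 1 and 0 < δ ≤ 1 be reals, and suppose there is a fixed labeling N* : V → A such that |{i : N_i = N*}| ≥ γ·m. Assign to each i ∈ {1,…,m} an independent uniformly random node π(i) ∈ V, and for u ∈ V set T_u = {i : π(i) = u}; for i ∈ T_u set NCount(i,u) = |{j ∈ T_u : j ≠ i and N_j(u) = N_i(u)}|. There is an absolute constant c > 0 such that if m ≥ c·n·ln(n·m/δ)/(2γ−1)², then with probability at least 1 − δ the following holds simultaneously for every u ∈ V and all i, j ∈ T_u with N_i(u) = N*(u) and N_j(u) ≠ N*(u): NCount(i,u) > NCount(j,u). -/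
/-!
Call entity `i` good if `N i = N*`. If at a node `u` the good entities outnumber the bad ones,
every good entity at `u` has more companions with its label than any bad one, since the
companions of a bad `j` sharing its label are bad while all good entities share the label
`N* u`. So it suffices that every node gets a strict good majority. For a fixed node the
exponential moment of `t · (#bad - #good)` factors over the entities, each factor being
`1 + (e^{±t} - 1)/n ≤ exp ((e^{±t} - 1)/n)`; with `t = (2γ - 1)/2` the failure count is at most
`n^m exp (-m (2γ - 1)² / (4n)) ≤ n^m δ/n`, and a union bound over the `n` nodes gives `c = 4`.
-/

open Finset

lemma card_filter_nonneg_le_sum_exp {α : Type*} [Fintype α] (g : α → ℝ)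
    [DecidablePred fun x => 0 ≤ g x] :
    (#{x | 0 ≤ g x} : ℝ) ≤ ∑ x, Real.exp (g x) := by
  rw [card_eq_sum_ones, Nat.cast_sum, Nat.cast_one]
  calc ∑ x ∈ univ.filter (fun x => 0 ≤ g x), (1 : ℝ)
      ≤ ∑ x ∈ univ.filter (fun x => 0 ≤ g x), Real.exp (g x) :=
        sum_le_sum fun x hx => Real.one_le_exp (mem_filter.1 hx).2
    _ ≤ ∑ x, Real.exp (g x) :=
        sum_le_sum_of_subset_of_nonneg (subset_univ _) fun x _ _ => (Real.exp_pos _).le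

lemma exp_sub_one_le_add_sq {x : ℝ} (hx : |x| ≤ 1) : Real.exp x - 1 ≤ x + x ^ 2 := by
  linarith [le_abs_self (Real.exp x - 1 - x), Real.abs_exp_sub_one_sub_id_le hx]

lemma sub_one_add_exp_le_mul_exp {n : ℝ} (hn : 0 < n) (x : ℝ) :
    n - 1 + Real.exp x ≤ n * Real.exp ((Real.exp x - 1) / n) := by
  calc n - 1 + Real.exp x = n * ((Real.exp x - 1) / n + 1) := by field_simp; ring
    _ ≤ n * Real.exp ((Real.exp x - 1) / n) := by gcongr; exact Real.add_one_le_exp _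

section Occupancy

variable {ι V : Type*} [Fintype ι] [DecidableEq ι] [Fintype V] [DecidableEq V]

lemma sum_exp_sum_ite_eq_prod (u : V) (s : ι → ℝ) :
    ∑ π : ι → V, Real.exp (∑ i, if π i = u then s i else 0) =
      ∏ i, (Fintype.card V - 1 + Real.exp (s i)) := by
  have : Nonempty V := ⟨u⟩
  simp_rw [Real.exp_sum, ← Fintype.prod_sum (fun i v => Real.exp (if v = u then s i else 0))]
  refine prod_congr rfl fun i _ => ?_
  rw [← sum_erase_add _ _ (mem_univ u), if_pos rfl,
    sum_congr rfl fun v hv => by rw [if_neg (ne_of_mem_erase hv), Real.exp_zero]]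
  simp [card_erase_of_mem (mem_univ u), Nat.cast_pred Fintype.card_pos]

lemma sum_exp_sum_ite_le (u : V) (s : ι → ℝ) :
    ∑ π : ι → V, Real.exp (∑ i, if π i = u then s i else 0) ≤
      (Fintype.card V : ℝ) ^ Fintype.card ι *
        Real.exp (∑ i, (Real.exp (s i) - 1) / Fintype.card V) := by
  have hV : (1 : ℝ) ≤ Fintype.card V := by
    have : Nonempty V := ⟨u⟩
    exact_mod_cast Fintype.card_pos
  rw [sum_exp_sum_ite_eq_prod, Real.exp_sum, ← card_univ (α := ι), ← prod_const,
    ← prod_mul_distrib]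
  refine prod_le_prod (fun i _ => ?_) fun i _ => sub_one_add_exp_le_mul_exp (by linarith) _
  linarith [Real.exp_pos (s i)]

lemma sum_exp_sub_one_ite_mem_le (G : Finset ι) {t : ℝ} (ht : |t| ≤ 1) :
    ∑ i, (Real.exp (if i ∈ G then -t else t) - 1) ≤
      t * (Fintype.card ι - 2 * #G) + Fintype.card ι * t ^ 2 := by
  have hGc : ((Gᶜ).card : ℝ) = Fintype.card ι - #G := by
    rw [card_compl, Nat.cast_sub (card_le_univ G)]
  calc ∑ i, (Real.exp (if i ∈ G then -t else t) - 1)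
      ≤ ∑ i, ((if i ∈ G then -t else t) + t ^ 2) := by
        refine sum_le_sum fun i _ => ?_
        split_ifs
        · simpa using exp_sub_one_le_add_sq (x := -t) (by rwa [abs_neg])
        · exact exp_sub_one_le_add_sq ht
    _ = t * (Fintype.card ι - 2 * #G) + Fintype.card ι * t ^ 2 := by
        rw [sum_add_distrib, ← sum_add_sum_compl G,
          sum_congr rfl fun i hi => if_pos hi, sum_congr rfl fun i hi => if_neg (mem_compl.1 hi)]
        simp only [sum_const, card_univ, nsmul_eq_mul, hGc]
        ring

lemma card_filter_card_mem_le_card_notMem_le (u : V) (G : Finset ι) {γ : ℝ}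
    (hγ : 1 / 2 ≤ γ) (hγ1 : γ ≤ 1) (hG : γ * Fintype.card ι ≤ #G) :
    (#{π : ι → V | #{i | π i = u ∧ i ∈ G} ≤ #{i | π i = u ∧ i ∉ G}} : ℝ) ≤
      (Fintype.card V : ℝ) ^ Fintype.card ι *
        Real.exp (-(Fintype.card ι * (2 * γ - 1) ^ 2) / (4 * Fintype.card V)) := by
  set t := (2 * γ - 1) / 2 with ht
  have ht0 : 0 ≤ t := by linarith
  set s : ι → ℝ := fun i => if i ∈ G then -t else t
  have hsum (π : ι → V) : ∑ i, (if π i = u then s i else 0) =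
      t * #{i | π i = u ∧ i ∉ G} - t * #{i | π i = u ∧ i ∈ G} := by
    simp only [card_eq_sum_ones, Nat.cast_sum, mul_sum, sum_filter, ← sum_sub_distrib]
    refine sum_congr rfl fun i _ => ?_
    by_cases hu : π i = u <;> by_cases hi : i ∈ G <;> simp [s, hu, hi]
  have hexp : ∑ i, (Real.exp (s i) - 1) ≤ -(Fintype.card ι * (2 * γ - 1) ^ 2) / 4 := by
    refine (sum_exp_sub_one_ite_mem_le G (abs_le.2 ⟨by linarith, by linarith⟩)).trans ?_
    rw [ht]; nlinarith [mul_le_mul_of_nonneg_left hG (by linarith : (0 : ℝ) ≤ 2 * γ - 1)]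
  have hcount : #{π : ι → V | #{i | π i = u ∧ i ∈ G} ≤ #{i | π i = u ∧ i ∉ G}} ≤
      #{π : ι → V | 0 ≤ ∑ i, if π i = u then s i else 0} := by
    refine card_le_card fun π hπ => ?_
    rw [mem_filter] at hπ ⊢
    rw [hsum, sub_nonneg]
    exact ⟨hπ.1, mul_le_mul_of_nonneg_left (by exact_mod_cast hπ.2) ht0⟩
  calc (#{π : ι → V | #{i | π i = u ∧ i ∈ G} ≤ #{i | π i = u ∧ i ∉ G}} : ℝ)
      ≤ #{π : ι → V | 0 ≤ ∑ i, if π i = u then s i else 0} := by exact_mod_cast hcount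
    _ ≤ ∑ π : ι → V, Real.exp (∑ i, if π i = u then s i else 0) :=
        card_filter_nonneg_le_sum_exp _
    _ ≤ _ := sum_exp_sum_ite_le u s
    _ ≤ _ := by
        rw [← sum_div, ← div_div]
        gcongr

end Occupancy

lemma card_sub_sum_le_card_filter_forall {α β : Type*} [Fintype α] [Fintype β] (P : β → α → Prop)
    [∀ u, DecidablePred (P u)] :
    (Fintype.card α : ℝ) - ∑ u, (#{x | ¬ P u x} : ℝ) ≤ #{x | ∀ u, P u x} := by
  classical
  have hunion : (#{x | ¬ ∀ u, P u x} : ℝ) ≤ ∑ u, (#{x | ¬ P u x} : ℝ) := by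
    rw [← Nat.cast_sum, Nat.cast_le]
    refine (card_le_card fun x hx => ?_).trans card_biUnion_le
    simp only [mem_filter, mem_univ, true_and, not_forall, mem_biUnion] at hx ⊢
    exact hx
  have hsplit := card_filter_add_card_filter_not (s := univ) (fun x => ∀ u, P u x)
  rw [card_univ] at hsplit
  rw [← hsplit, Nat.cast_add]
  linarith

lemma card_filter_eq_lt_card_filter_eq {ι A : Type*} [Fintype ι] [DecidableEq ι] [DecidableEq A]
    (p : ι → Prop) [DecidablePred p] (f : ι → A) (a : A) (G : Finset ι) (hG : ∀ i ∈ G, f i = a)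
    (h : #{i | p i ∧ i ∉ G} < #{i | p i ∧ i ∈ G}) {i j : ι} (hj : p j)
    (hfi : f i = a) (hfj : f j ≠ a) :
    #{j' | p j' ∧ j' ≠ j ∧ f j' = f j} < #{i' | p i' ∧ i' ≠ i ∧ f i' = f i} := by
  have hjB : j ∈ ({k | p k ∧ k ∉ G} : Finset ι) :=
    mem_filter.2 ⟨mem_univ _, hj, fun hjG => hfj (hG j hjG)⟩
  have hle : #{j' | p j' ∧ j' ≠ j ∧ f j' = f j} ≤ #{k | p k ∧ k ∉ G} - 1 := by
    rw [← card_erase_of_mem hjB]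
    refine card_le_card fun k hk => ?_
    simp only [mem_erase, mem_filter, mem_univ, true_and] at hk ⊢
    exact ⟨hk.2.1, hk.1, fun hkG => hfj (hk.2.2.symm.trans (hG k hkG))⟩
  have hge : #{k | p k ∧ k ∈ G} - 1 ≤ #{i' | p i' ∧ i' ≠ i ∧ f i' = f i} := by
    refine (pred_card_le_card_erase (a := i)).trans (card_le_card fun k hk => ?_)
    simp only [mem_erase, mem_filter, mem_univ, true_and] at hk ⊢
    exact ⟨hk.2.1, hk.1, (hG k hk.2.2).trans hfi.symm⟩
  have hB := card_pos.2 ⟨j, hjB⟩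
  omega

lemma exp_neg_le_div_of_log_le {n m δ ε : ℝ} (hn : 0 < n) (hm : 1 ≤ m) (hδ : 0 < δ)
    (hε : 0 < ε) (h : 4 * n * Real.log (n * m / δ) / ε ^ 2 ≤ m) :
    Real.exp (-(m * ε ^ 2) / (4 * n)) ≤ δ / n := by
  have hlog : Real.log (n / δ) ≤ m * ε ^ 2 / (4 * n) := by
    calc Real.log (n / δ) ≤ Real.log (n * m / δ) := by
          gcongr; exact le_mul_of_one_le_right hn.le hm
      _ ≤ m * ε ^ 2 / (4 * n) := by
          rw [div_le_iff₀ (by positivity)] at h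
          rw [le_div_iff₀ (by positivity)]
          linarith
  calc Real.exp (-(m * ε ^ 2) / (4 * n)) ≤ Real.exp (-Real.log (n / δ)) := by
        rw [neg_div]; gcongr
    _ = δ / n := by rw [Real.exp_neg, Real.exp_log (by positivity), inv_div]

/-- There is an absolute constant `c > 0` such that if a `γ`-fraction (`γ > 1/2`) of the
labelings equal `N*` and `m ≥ c·n·ln(nm/δ)/(2γ-1)²`, then with probability `≥ 1-δ` over
a uniform random assignment `π` of entities to nodes, for every node `u` the entities in
`T_u` agreeing with `N*` at `u` have strictly larger `NCount` than those disagreeing. -/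
theorem stmt_9 : ∃ c : ℝ, 0 < c ∧
    ∀ (V : Type) (A : Type), ∀ (_ : Fintype V) (_ : DecidableEq V) (_ : DecidableEq A),
    ∀ (n : ℕ), 1 ≤ n → Fintype.card V = n →
    ∀ (m : ℕ) (N : Fin m → V → A) (Nstar : V → A) (γ δ : ℝ),
      1 / 2 < γ → γ ≤ 1 → 0 < δ → δ ≤ 1 →
      γ * m ≤ ((Finset.univ.filter (fun i : Fin m => N i = Nstar)).card : ℝ) →
      c * n * Real.log ((n : ℝ) * m / δ) / (2 * γ - 1) ^ 2 ≤ (m : ℝ) →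
      1 - δ ≤ ((Finset.univ.filter (fun π : Fin m → V =>
          ∀ u : V, ∀ i j : Fin m, π i = u → π j = u →
            N i u = Nstar u → N j u ≠ Nstar u →
            (Finset.univ.filter (fun j' : Fin m =>
                π j' = u ∧ j' ≠ j ∧ N j' u = N j u)).card <
            (Finset.univ.filter (fun i' : Fin m =>
                π i' = u ∧ i' ≠ i ∧ N i' u = N i u)).card)).card : ℝ) /
        (n : ℝ) ^ m := by
  refine ⟨4, by norm_num, ?_⟩
  intro V A _ _ _ n hn hV m N Nstar γ δ hγ hγ1 hδ _ hG hm
  have hn0 : (0 : ℝ) < n := by exact_mod_cast hn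
  obtain rfl | hm1 := m.eq_zero_or_pos
  · simp [hδ.le]
  set G := univ.filter fun i : Fin m => N i = Nstar
  have htail (u : V) : (#{π : Fin m → V | #{i | π i = u ∧ i ∈ G} ≤ #{i | π i = u ∧ i ∉ G}} : ℝ)
      ≤ n ^ m * (δ / n) := by
    have h := card_filter_card_mem_le_card_notMem_le u G hγ.le hγ1 (by simpa using hG)
    rw [hV, Fintype.card_fin] at h
    refine h.trans (mul_le_mul_of_nonneg_left ?_ (by positivity))
    exact exp_neg_le_div_of_log_le hn0 (by exact_mod_cast hm1) hδ (by linarith) hm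
  have hmajority := card_sub_sum_le_card_filter_forall fun (u : V) (π : Fin m → V) =>
    #{i | π i = u ∧ i ∉ G} < #{i | π i = u ∧ i ∈ G}
  simp only [not_lt] at hmajority
  rw [le_div_iff₀ (by positivity)]
  calc (1 - δ) * n ^ m = Fintype.card (Fin m → V) - ∑ _u : V, n ^ m * (δ / n) := by
        simp [hV]; field_simp
    _ ≤ _ := by gcongr with u; exact htail u
    _ ≤ _ := hmajority.trans <| Nat.cast_le.2 <| card_le_card <| monotone_filter_right _
        fun π _ hπ u i j _ hj hNi hNj =>
          card_filter_eq_lt_card_filter_eq (fun k => π k = u) (fun k => N k u) (Nstar u) G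
            (fun k hk => by rw [(mem_filter.1 hk).2]) (hπ u) hj hNi hNj
end

section
/- Fix integers n ≥ 1, 1 ≤ k ≤ n, let Q ⊆ {1,…,n} with |Q| = q, and let g : {0,1}^n → Bool be any function that depends only on the coordinates in Q (i.e., g(x) = g(y) whenever x_u = y_u for all u ∈ Q). Then the μ_{n,k}-probability of the event {x : g(x) = (x = 0^n)} is at most 1 − τ/2, where τ = C(n−q,k)/C(n,k). -/
/-- The weight that the distribution `μ_{n,k}` puts on `x ∈ {0,1}^n`:
mass `1/2` on the all-zeros vector and mass `1/(2·C(n,k))` on each vector with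
exactly `k` ones. -/
noncomputable def muWeight (n k : ℕ) (x : Fin n → Bool) : ℝ :=
  if x = (fun _ => false) then 1 / 2
  else if (Finset.univ.filter (fun u => x u = true)).card = k then
    1 / (2 * (n.choose k : ℝ))
  else 0

/-- The `μ_{n,k}`-probability of an event `E ⊆ {0,1}^n`. -/
noncomputable def muProb (n k : ℕ) (E : Finset (Fin n → Bool)) : ℝ :=
  ∑ x ∈ E, muWeight n k x

/-!
Let `z = 0ⁿ`. If `g z = false`, the tester errs at `z`, which has mass `1/2 ≥ τ/2`. If `g z = true`,
then `g` is also `true` on every weight-`k` vector vanishing on `Q`, since it agrees with `z` on `Q`;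
there are `C(n-q,k)` of them, each of mass `1/(2·C(n,k))`, so the tester errs with probability at
least `τ/2`. As `μ_{n,k}` has total mass `1`, it is correct with probability at most `1 - τ/2`.
-/

open Finset

section WeightSlice

variable {ι : Type*} [Fintype ι] [DecidableEq ι]

def weightSliceOff (Q : Finset ι) (k : ℕ) : Finset (ι → Bool) :=
  univ.filter fun x => (univ.filter fun u => x u = true).card = k ∧ ∀ u ∈ Q, x u = false

@[simp]
theorem mem_weightSliceOff {Q : Finset ι} {k : ℕ} {x : ι → Bool} :
    x ∈ weightSliceOff Q k ↔
      (univ.filter fun u => x u = true).card = k ∧ ∀ u ∈ Q, x u = false := by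
  simp [weightSliceOff]

theorem card_weightSliceOff (Q : Finset ι) (k : ℕ) :
    (weightSliceOff Q k).card = (Fintype.card ι - Q.card).choose k := by
  rw [← card_compl, ← card_powersetCard]
  refine card_nbij' (fun x => univ.filter fun u => x u = true) (fun s u => decide (u ∈ s))
    (fun x hx => ?_) (fun s hs => ?_) (fun x _ => ?_) (fun s _ => ?_)
  · rw [mem_coe, mem_weightSliceOff] at hx
    refine mem_powersetCard.2 ⟨fun u hu => mem_compl.2 fun huQ => ?_, hx.1⟩
    simp [hx.2 u huQ] at hu
  · obtain ⟨hsQ, hs⟩ := mem_powersetCard.1 hs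
    simp only [mem_coe, mem_weightSliceOff, decide_eq_true_eq, filter_mem_eq_inter, univ_inter,
      hs, decide_eq_false_iff_not, true_and]
    exact fun u huQ hus => mem_compl.1 (hsQ hus) huQ
  · funext u
    by_cases h : x u = true <;> simp [h]
  · ext u
    simp

theorem zero_notMem_weightSliceOff (Q : Finset ι) {k : ℕ} (hk : k ≠ 0) :
    (fun _ => false) ∉ weightSliceOff Q k := by
  simp [weightSliceOff, Ne.symm hk]

end WeightSlice

section Mu

variable {n k : ℕ}

theorem muWeight_nonneg (x : Fin n → Bool) : 0 ≤ muWeight n k x := by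
  unfold muWeight
  split_ifs <;> positivity

theorem muWeight_zero : muWeight n k (fun _ => false) = 1 / 2 :=
  if_pos rfl

theorem muWeight_of_mem_weightSliceOff (hk : k ≠ 0) {Q : Finset (Fin n)} {x : Fin n → Bool}
    (hx : x ∈ weightSliceOff Q k) : muWeight n k x = 1 / (2 * (n.choose k : ℝ)) := by
  have hx0 : x ≠ fun _ => false := fun h => zero_notMem_weightSliceOff Q hk (h ▸ hx)
  rw [muWeight, if_neg hx0, if_pos (mem_weightSliceOff.1 hx).1]

theorem sum_muWeight_weightSliceOff (hk : k ≠ 0) (Q : Finset (Fin n)) :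
    ∑ x ∈ weightSliceOff Q k, muWeight n k x =
      ((n - Q.card).choose k : ℝ) / (2 * (n.choose k : ℝ)) := by
  rw [sum_congr rfl fun x => muWeight_of_mem_weightSliceOff hk, sum_const,
    card_weightSliceOff, Fintype.card_fin, nsmul_eq_mul]
  ring

theorem muProb_univ (hk : k ≠ 0) (hkn : k ≤ n) : muProb n k univ = 1 := by
  have hsupp : ∀ x ∈ univ, x ∉ insert (fun _ => false) (weightSliceOff ∅ k) →
      muWeight n k x = 0 := by
    intro x _ hx
    simp only [mem_insert, mem_weightSliceOff, notMem_empty, false_imp_iff, implies_true,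
      and_true, not_or] at hx
    rw [muWeight, if_neg hx.1, if_neg hx.2]
  have hC : (n.choose k : ℝ) ≠ 0 := by exact_mod_cast (Nat.choose_pos hkn).ne'
  rw [muProb, ← sum_subset (subset_univ _) hsupp,
    sum_insert (zero_notMem_weightSliceOff ∅ hk), muWeight_zero,
    sum_muWeight_weightSliceOff hk, card_empty, Nat.sub_zero]
  field_simp
  norm_num

theorem le_muProb_filter_ne_of_dependsOn (hk : k ≠ 0) (Q : Finset (Fin n))
    (g : (Fin n → Bool) → Bool) (hg : ∀ x y : Fin n → Bool, (∀ u ∈ Q, x u = y u) → g x = g y) :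
    ((n - Q.card).choose k : ℝ) / n.choose k / 2 ≤
      muProb n k (univ.filter fun x => ¬ g x = decide (x = fun _ => false)) := by
  cases h0 : g fun _ => false
  · have hzero : (fun _ => false) ∈ univ.filter fun x => ¬ g x = decide (x = fun _ => false) := by
      simp [h0]
    have hτ : ((n - Q.card).choose k : ℝ) / n.choose k ≤ 1 :=
      div_le_one_of_le₀ (by exact_mod_cast Nat.choose_le_choose k (n.sub_le _)) (by positivity)
    have := single_le_sum (fun x _ => muWeight_nonneg (k := k) x) hzero
    rw [muWeight_zero] at this
    rw [muProb]
    linarith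
  · have hsub : weightSliceOff Q k ⊆ univ.filter fun x => ¬ g x = decide (x = fun _ => false) := by
      intro x hx
      have hx0 : x ≠ fun _ => false := fun h => zero_notMem_weightSliceOff Q hk (h ▸ hx)
      have hgx : g x = true := h0 ▸ hg x _ fun u hu => (mem_weightSliceOff.1 hx).2 u hu
      simp [hgx, hx0]
    calc ((n - Q.card).choose k : ℝ) / n.choose k / 2
        = ∑ x ∈ weightSliceOff Q k, muWeight n k x := by
          rw [sum_muWeight_weightSliceOff hk, div_div, mul_comm (n.choose k : ℝ)]
      _ ≤ _ := sum_le_sum_of_subset_of_nonneg hsub fun x _ _ => muWeight_nonneg x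

end Mu

theorem stmt_11_general (n k : ℕ) (hk1 : 1 ≤ k) (hkn : k ≤ n)
    (Q : Finset (Fin n)) (q : ℕ) (hQ : Q.card = q)
    (g : (Fin n → Bool) → Bool)
    (hg : ∀ x y : Fin n → Bool, (∀ u ∈ Q, x u = y u) → g x = g y) :
    muProb n k (Finset.univ.filter
        (fun x : Fin n → Bool => g x = decide (x = fun _ => false))) ≤
      1 - (((n - q).choose k : ℝ) / (n.choose k : ℝ)) / 2 := by
  subst hQ
  have hk : k ≠ 0 := Nat.one_le_iff_ne_zero.1 hk1
  have htotal := muProb_univ hk hkn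
  have herror := le_muProb_filter_ne_of_dependsOn hk Q g hg
  rw [muProb, ← sum_filter_add_sum_filter_not univ fun x => g x = decide (x = fun _ => false)]
    at htotal
  rw [muProb] at herror ⊢
  linarith

/-- Any tester `g` reading only the coordinates in `Q` (with `|Q| = q`) is correct about
whether `x = 0^n` with `μ_{n,k}`-probability at most `1 - τ/2`, where
`τ = C(n-q,k)/C(n,k)`. -/
theorem stmt_11 (n k : ℕ) (hn : 1 ≤ n) (hk1 : 1 ≤ k) (hkn : k ≤ n)
    (Q : Finset (Fin n)) (q : ℕ) (hQ : Q.card = q)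
    (g : (Fin n → Bool) → Bool)
    (hg : ∀ x y : Fin n → Bool, (∀ u ∈ Q, x u = y u) → g x = g y) :
    muProb n k (Finset.univ.filter
        (fun x : Fin n → Bool => g x = decide (x = fun _ => false))) ≤
      1 - (((n - q).choose k : ℝ) / (n.choose k : ℝ)) / 2 :=
  stmt_11_general n k hk1 hkn Q q hQ g hg
end

section
/- For all natural numbers n, q, k with q + k ≤ n, one has C(n−q,k)/C(n,k) ≥ 1 − q·k/(n−q+1) as real numbers. -/
/-!
The ratio `C(n-q,k)/C(n,k)` telescopes to `∏_{i<q} (1 - k/(n-i))`. Each factor `k/(n-i)` lies in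
`[0,1]` and is at most `k/(n-q+1)`, so the Weierstrass product inequality
`∏ (1 - xᵢ) ≥ 1 - ∑ xᵢ` gives the bound.
-/

open Finset

theorem Finset.one_sub_sum_le_prod_one_sub {ι R : Type*} [CommRing R] [PartialOrder R]
    [IsOrderedRing R] (s : Finset ι) {x : ι → R} (h0 : ∀ i ∈ s, 0 ≤ x i)
    (h1 : ∀ i ∈ s, x i ≤ 1) : 1 - ∑ i ∈ s, x i ≤ ∏ i ∈ s, (1 - x i) := by
  classical
  induction s using Finset.induction_on with
  | empty => simp
  | insert a s ha ih =>
    rw [sum_insert ha, prod_insert ha]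
    have hxa : 0 ≤ 1 - x a := sub_nonneg.2 (h1 a (mem_insert_self a s))
    have hS : 0 ≤ x a * ∑ i ∈ s, x i :=
      mul_nonneg (h0 a (mem_insert_self a s))
        (sum_nonneg fun i hi => h0 i (mem_insert_of_mem hi))
    calc 1 - (x a + ∑ i ∈ s, x i) ≤ (1 - x a) * (1 - ∑ i ∈ s, x i) := by
          linear_combination hS
      _ ≤ (1 - x a) * ∏ i ∈ s, (1 - x i) :=
          mul_le_mul_of_nonneg_left
            (ih (fun i hi => h0 i (mem_insert_of_mem hi))
              (fun i hi => h1 i (mem_insert_of_mem hi))) hxa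

theorem Nat.cast_choose_eq_cast_choose_succ_mul {K : Type*} [Field K] [CharZero K] (m k : ℕ) :
    (m.choose k : K) = (m + 1).choose k * (1 - k / (m + 1)) := by
  rcases le_or_gt k (m + 1) with hk | hk
  · have h := congrArg (Nat.cast : ℕ → K) (Nat.choose_mul_succ_eq m k)
    push_cast [Nat.cast_sub hk] at h
    have hm : (m + 1 : K) ≠ 0 := Nat.cast_add_one_ne_zero m
    field_simp
    linear_combination h
  · rw [Nat.choose_eq_zero_of_lt hk, Nat.choose_eq_zero_of_lt (by omega)]
    simp

theorem Nat.cast_choose_sub_eq_mul_prod {K : Type*} [Field K] [CharZero K] {n q : ℕ}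
    (k : ℕ) (hq : q ≤ n) :
    ((n - q).choose k : K) = n.choose k * ∏ i ∈ range q, (1 - k / ((n : K) - i)) := by
  induction q with
  | zero => simp
  | succ q ih =>
    have hsucc : n - (q + 1) + 1 = n - q := by omega
    have hcast : ((n - (q + 1) : ℕ) : K) + 1 = (n : K) - q := by
      rw [← Nat.cast_add_one, hsucc, Nat.cast_sub (by omega)]
    rw [Nat.cast_choose_eq_cast_choose_succ_mul (n - (q + 1)) k, hsucc, hcast,
      ih (by omega), prod_range_succ, mul_assoc]

theorem stmt_12 (n q k : ℕ) (h : q + k ≤ n) :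
    1 - ((q : ℝ) * k) / ((n : ℝ) - q + 1) ≤ ((n - q).choose k : ℝ) / (n.choose k : ℝ) := by
  have hchoose : (n.choose k : ℝ) ≠ 0 := by exact_mod_cast (Nat.choose_pos (by omega)).ne'
  rw [Nat.cast_choose_sub_eq_mul_prod k (by omega : q ≤ n), mul_div_cancel_left₀ _ hchoose]
  have hqn : (q : ℝ) + k ≤ n := by exact_mod_cast h
  have hk : (k : ℝ) < n - q + 1 := by linarith
  have hgap : ∀ i ∈ range q, (n : ℝ) - q + 1 ≤ n - i := fun i hi => by
    have : (i : ℝ) + 1 ≤ q := by exact_mod_cast mem_range.1 hi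
    linarith
  have hpos : ∀ i ∈ range q, 0 < (n : ℝ) - i := fun i hi => by
    linarith [hgap i hi, (Nat.cast_nonneg k : (0 : ℝ) ≤ k)]
  calc 1 - (q : ℝ) * k / (n - q + 1) = 1 - ∑ _i ∈ range q, (k : ℝ) / (n - q + 1) := by
        rw [sum_const, card_range, nsmul_eq_mul, mul_div_assoc]
    _ ≤ 1 - ∑ i ∈ range q, (k : ℝ) / (n - i) :=
        sub_le_sub_left (sum_le_sum fun i hi =>
          div_le_div_of_nonneg_left k.cast_nonneg (by linarith) (hgap i hi)) 1
    _ ≤ ∏ i ∈ range q, (1 - k / ((n : ℝ) - i)) :=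
        one_sub_sum_le_prod_one_sub _ (fun i hi => div_nonneg k.cast_nonneg (hpos i hi).le)
          (fun i hi => (div_le_one (hpos i hi)).2 (by linarith [hgap i hi]))
end

section
/- Let n, q, α be real numbers with 0 < α < 1, 0 < q, and q ≤ (1−α)·n. Then (n−q)·(H(α·n/(n−q)) − H(α)) ≤ q·α·ln((1−α)/α), where H(p) = −p·ln p − (1−p)·ln(1−p) is the binary entropy function with natural logarithm (Mathlib's Real.binEntropy). -/
/-!
Binary entropy is concave on `[0, 1]` with `H'(p) = log ((1 - p) / p)`, so its graph lies below
each tangent line.  Put `β = α n / (n - q)`: the hypotheses give `α < β ≤ 1` and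
`(n - q) (β - α) = q α`, and the tangent line at `α` bounds `(n - q) (H β - H α)`.
-/

open Real

namespace Real

lemma hasDerivAt_binEntropy_log_div {p : ℝ} (hp₀ : 0 < p) (hp₁ : p < 1) :
    HasDerivAt binEntropy (log ((1 - p) / p)) p := by
  rw [log_div (by linarith) hp₀.ne']
  exact hasDerivAt_binEntropy hp₀.ne' hp₁.ne

lemma binEntropy_sub_le_log_div_mul {p r : ℝ} (hp₀ : 0 < p) (hp₁ : p < 1)
    (hr₀ : 0 ≤ r) (hr₁ : r ≤ 1) :
    binEntropy r - binEntropy p ≤ log ((1 - p) / p) * (r - p) := by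
  have hconc := strictConcave_binEntropy.concaveOn
  have hp : p ∈ Set.Icc (0 : ℝ) 1 := ⟨hp₀.le, hp₁.le⟩
  have hr : r ∈ Set.Icc (0 : ℝ) 1 := ⟨hr₀, hr₁⟩
  have hderiv := hasDerivAt_binEntropy_log_div hp₀ hp₁
  rcases lt_trichotomy r p with hrp | rfl | hpr
  · have := hconc.le_slope_of_hasDerivAt hr hp hrp hderiv
    rw [slope_def_field, le_div_iff₀ (sub_pos.2 hrp)] at this
    linarith
  · simp
  · have := hconc.slope_le_of_hasDerivAt hp hr hpr hderiv
    rwa [slope_def_field, div_le_iff₀ (sub_pos.2 hpr)] at this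

end Real

theorem stmt_14 (n q α : ℝ) (hα0 : 0 < α) (hα1 : α < 1) (hq0 : 0 < q)
    (hqn : q ≤ (1 - α) * n) :
    (n - q) * (Real.binEntropy (α * n / (n - q)) - Real.binEntropy α) ≤
      q * α * Real.log ((1 - α) / α) := by
  have hn : 0 < n := by nlinarith
  have hnq : 0 < n - q := by nlinarith
  set β := α * n / (n - q)
  have hβα : (n - q) * (β - α) = q * α := by
    simp only [β]; field_simp; ring
  have hβ₀ : 0 ≤ β := by positivity
  have hβ₁ : β ≤ 1 := by rw [div_le_one hnq]; linarith
  calc (n - q) * (binEntropy β - binEntropy α)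
      ≤ (n - q) * (log ((1 - α) / α) * (β - α)) :=
        mul_le_mul_of_nonneg_left (binEntropy_sub_le_log_div_mul hα0 hα1 hβ₀ hβ₁) hnq.le
    _ = q * α * log ((1 - α) / α) := by rw [mul_left_comm, hβα, mul_comm]
end
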